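/- arXiv:1305.6669 — 3 statements merged into one kernel-verified Lean document; each statement's English description precedes it below -/
import Mathlib

section
/- The number of tatami coverings of the 8×8 grid using only dominoes is exactly 2. -/
/-- Two cells of `ℤ × ℤ` are edge-adjacent (L1-distance 1). -/
def Adj (a b : ℤ × ℤ) : Prop := (a.1 - b.1).natAbs + (a.2 - b.2).natAbs = 1

instance (a b : ℤ × ℤ) : Decidable (Adj a b) := by unfold Adj; infer_instance

/-- A domino: a pair of edge-adjacent cells. -/
def IsDomino (d : Finset (ℤ × ℤ)) : Prop := ∃ a b : ℤ × ℤ, Adj a b ∧ d = {a, b}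

/-- `C` is a partition of the region `S` into pieces. -/
def IsPartition (S : Finset (ℤ × ℤ)) (C : Finset (Finset (ℤ × ℤ))) : Prop :=
  (∀ d ∈ C, d ⊆ S) ∧ ∀ c ∈ S, ∃! d, d ∈ C ∧ c ∈ d

/-- The four cells incident to the lattice point at the upper-right corner of cell `p`. -/
def Block (p : ℤ × ℤ) : Finset (ℤ × ℤ) :=
  {(p.1, p.2), (p.1 + 1, p.2), (p.1, p.2 + 1), (p.1 + 1, p.2 + 1)}

/-- Tatami condition: around each interior lattice point, some piece covers
    two of the four incident cells (so no four pieces meet there). -/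
def TatamiCond (S : Finset (ℤ × ℤ)) (C : Finset (Finset (ℤ × ℤ))) : Prop :=
  ∀ p : ℤ × ℤ, Block p ⊆ S → ∃ d ∈ C, 2 ≤ (d ∩ Block p).card

/-- A domino tatami covering of region `S`. -/
def DominoTatami (S : Finset (ℤ × ℤ)) (C : Finset (Finset (ℤ × ℤ))) : Prop :=
  IsPartition S C ∧ (∀ d ∈ C, IsDomino d) ∧ TatamiCond S C

/-- The `m × n` grid `{0,…,m−1} × {0,…,n−1}`. -/
noncomputable def grid (m n : ℕ) : Finset (ℤ × ℤ) := Finset.Ico 0 (m : ℤ) ×ˢ Finset.Ico 0 (n : ℤ)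


-- encoding
def dec (i : ℕ) : ℤ × ℤ := (((i % 8 : ℕ) : ℤ), ((i / 8 : ℕ) : ℤ))
def enc (z : ℤ × ℤ) : ℕ := (8 * z.2 + z.1).toNat

def place (occ i j : ℕ) : ℕ := occ ||| (1 <<< i) ||| (1 <<< j)

def covTwoN (D : List (ℕ × ℕ)) (b : ℕ) : Bool :=
  D.any (fun q => decide (q = (b, b+1) ∨ q = (b, b+8) ∨ q = (b+1, b+9) ∨ q = (b+8, b+9)))

def tatB (occ : ℕ) (D : List (ℕ × ℕ)) (bs : List ℕ) : Bool :=
  bs.all (fun b =>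
    !(decide (b % 8 < 7) && decide (b / 8 < 7) && [b, b+1, b+8, b+9].all occ.testBit)
      || covTwoN D b)

def hBlocks (i : ℕ) : List ℕ := [i+1, i, i - 1, i - 7, i - 8, i - 9]
def vBlocks (i : ℕ) : List ℕ := [i+8, i+7, i, i - 1, i - 8, i - 9]

def search : ℕ → ℕ → List ℕ → List (ℕ × ℕ) → List (List (ℕ × ℕ))
| 0, _, rem, D => match rem with
  | [] => [D]
  | _ :: _ => []
| (n+1), occ, rem, D => match rem with
  | [] => [D]
  | i :: rest =>
    (cond (decide (i % 8 < 7) && !occ.testBit (i+1) &&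
           tatB (place occ i (i+1)) ((i, i+1) :: D) (hBlocks i))
        (search n (place occ i (i+1)) (rest.erase (i+1)) ((i, i+1) :: D)) []) ++
    (cond (decide (i / 8 < 7) && !occ.testBit (i+8) &&
           tatB (place occ i (i+8)) ((i, i+8) :: D) (vBlocks i))
        (search n (place occ i (i+8)) (rest.erase (i+8)) ((i, i+8) :: D)) [])

def toC (L : List (ℕ × ℕ)) : Finset (Finset (ℤ × ℤ)) :=
  (L.map (fun q => ({dec q.1, dec q.2} : Finset (ℤ × ℤ)))).toFinset

def idxs : List ℕ := List.range 64

def Csol1 : Finset (Finset (ℤ × ℤ)) :=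
  {({(0,0),(1,0)} : Finset (ℤ × ℤ)),
   ({(2,0),(3,0)} : Finset (ℤ × ℤ)),
   ({(4,0),(5,0)} : Finset (ℤ × ℤ)),
   ({(6,0),(7,0)} : Finset (ℤ × ℤ)),
   ({(0,1),(0,2)} : Finset (ℤ × ℤ)),
   ({(1,1),(2,1)} : Finset (ℤ × ℤ)),
   ({(3,1),(4,1)} : Finset (ℤ × ℤ)),
   ({(5,1),(6,1)} : Finset (ℤ × ℤ)),
   ({(7,1),(7,2)} : Finset (ℤ × ℤ)),
   ({(1,2),(1,3)} : Finset (ℤ × ℤ)),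
   ({(2,2),(3,2)} : Finset (ℤ × ℤ)),
   ({(4,2),(5,2)} : Finset (ℤ × ℤ)),
   ({(6,2),(6,3)} : Finset (ℤ × ℤ)),
   ({(0,3),(0,4)} : Finset (ℤ × ℤ)),
   ({(2,3),(2,4)} : Finset (ℤ × ℤ)),
   ({(3,3),(4,3)} : Finset (ℤ × ℤ)),
   ({(5,3),(5,4)} : Finset (ℤ × ℤ)),
   ({(7,3),(7,4)} : Finset (ℤ × ℤ)),
   ({(1,4),(1,5)} : Finset (ℤ × ℤ)),
   ({(3,4),(4,4)} : Finset (ℤ × ℤ)),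
   ({(6,4),(6,5)} : Finset (ℤ × ℤ)),
   ({(0,5),(0,6)} : Finset (ℤ × ℤ)),
   ({(2,5),(3,5)} : Finset (ℤ × ℤ)),
   ({(4,5),(5,5)} : Finset (ℤ × ℤ)),
   ({(7,5),(7,6)} : Finset (ℤ × ℤ)),
   ({(1,6),(2,6)} : Finset (ℤ × ℤ)),
   ({(3,6),(4,6)} : Finset (ℤ × ℤ)),
   ({(5,6),(6,6)} : Finset (ℤ × ℤ)),
   ({(0,7),(1,7)} : Finset (ℤ × ℤ)),
   ({(2,7),(3,7)} : Finset (ℤ × ℤ)),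
   ({(4,7),(5,7)} : Finset (ℤ × ℤ)),
   ({(6,7),(7,7)} : Finset (ℤ × ℤ))}

def Csol2 : Finset (Finset (ℤ × ℤ)) :=
  {({(0,0),(0,1)} : Finset (ℤ × ℤ)),
   ({(1,0),(2,0)} : Finset (ℤ × ℤ)),
   ({(3,0),(4,0)} : Finset (ℤ × ℤ)),
   ({(5,0),(6,0)} : Finset (ℤ × ℤ)),
   ({(7,0),(7,1)} : Finset (ℤ × ℤ)),
   ({(1,1),(1,2)} : Finset (ℤ × ℤ)),
   ({(2,1),(3,1)} : Finset (ℤ × ℤ)),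
   ({(4,1),(5,1)} : Finset (ℤ × ℤ)),
   ({(6,1),(6,2)} : Finset (ℤ × ℤ)),
   ({(0,2),(0,3)} : Finset (ℤ × ℤ)),
   ({(2,2),(2,3)} : Finset (ℤ × ℤ)),
   ({(3,2),(4,2)} : Finset (ℤ × ℤ)),
   ({(5,2),(5,3)} : Finset (ℤ × ℤ)),
   ({(7,2),(7,3)} : Finset (ℤ × ℤ)),
   ({(1,3),(1,4)} : Finset (ℤ × ℤ)),
   ({(3,3),(3,4)} : Finset (ℤ × ℤ)),
   ({(4,3),(4,4)} : Finset (ℤ × ℤ)),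
   ({(6,3),(6,4)} : Finset (ℤ × ℤ)),
   ({(0,4),(0,5)} : Finset (ℤ × ℤ)),
   ({(2,4),(2,5)} : Finset (ℤ × ℤ)),
   ({(5,4),(5,5)} : Finset (ℤ × ℤ)),
   ({(7,4),(7,5)} : Finset (ℤ × ℤ)),
   ({(1,5),(1,6)} : Finset (ℤ × ℤ)),
   ({(3,5),(4,5)} : Finset (ℤ × ℤ)),
   ({(6,5),(6,6)} : Finset (ℤ × ℤ)),
   ({(0,6),(0,7)} : Finset (ℤ × ℤ)),
   ({(2,6),(3,6)} : Finset (ℤ × ℤ)),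
   ({(4,6),(5,6)} : Finset (ℤ × ℤ)),
   ({(7,6),(7,7)} : Finset (ℤ × ℤ)),
   ({(1,7),(2,7)} : Finset (ℤ × ℤ)),
   ({(3,7),(4,7)} : Finset (ℤ × ℤ)),
   ({(5,7),(6,7)} : Finset (ℤ × ℤ))}


-- ### basic geometry lemmas

lemma mem_grid' {z : ℤ × ℤ} : z ∈ grid 8 8 ↔ 0 ≤ z.1 ∧ z.1 < 8 ∧ 0 ≤ z.2 ∧ z.2 < 8 := by
  simp [grid, and_assoc]

lemma adj_ne {a b : ℤ × ℤ} (h : Adj a b) : a ≠ b := by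
  rintro rfl; unfold Adj at h; omega

lemma adj_symm {a b : ℤ × ℤ} (h : Adj a b) : Adj b a := by
  unfold Adj at *; omega

lemma adj_cases {a b : ℤ × ℤ} (h : Adj a b) :
    b = (a.1 + 1, a.2) ∨ b = (a.1 - 1, a.2) ∨ b = (a.1, a.2 + 1) ∨ b = (a.1, a.2 - 1) := by
  obtain ⟨a1, a2⟩ := a; obtain ⟨b1, b2⟩ := b
  unfold Adj at h; simp only [Prod.ext_iff]; simp at h ⊢; omega

lemma partner {d : Finset (ℤ × ℤ)} {c : ℤ × ℤ} (hd : IsDomino d) (hc : c ∈ d) :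
    ∃ c', d = {c, c'} ∧ Adj c c' := by
  obtain ⟨a, b, hab, rfl⟩ := hd
  rcases Finset.mem_insert.mp hc with rfl | hc
  · exact ⟨b, rfl, hab⟩
  · rcases Finset.mem_singleton.mp hc with rfl
    exact ⟨a, Finset.pair_comm a c, adj_symm hab⟩

lemma dec_mem {i : ℕ} (h : i < 64) : dec i ∈ grid 8 8 := by
  rw [mem_grid']; simp [dec]; omega

lemma enc_dec {i : ℕ} (h : i < 64) : enc (dec i) = i := by
  simp [enc, dec]; omega

lemma dec_enc {z : ℤ × ℤ} (h : z ∈ grid 8 8) : dec (enc z) = z := by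
  rw [mem_grid'] at h; obtain ⟨x, y⟩ := z
  simp only [enc, dec, Prod.ext_iff]; simp at h ⊢; omega

lemma enc_lt {z : ℤ × ℤ} (h : z ∈ grid 8 8) : enc z < 64 := by
  rw [mem_grid'] at h; simp [enc]; omega

lemma mem_Block {z p : ℤ × ℤ} :
    z ∈ Block p ↔ z = (p.1, p.2) ∨ z = (p.1 + 1, p.2) ∨ z = (p.1, p.2 + 1) ∨ z = (p.1 + 1, p.2 + 1) := by
  simp [Block]

lemma blockIdx {b : ℕ} {z : ℤ × ℤ} (h1 : b % 8 < 7) (h2 : b / 8 < 7) (hz : z ∈ Block (dec b)) :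
    z ∈ grid 8 8 ∧ (enc z = b ∨ enc z = b + 1 ∨ enc z = b + 8 ∨ enc z = b + 9) := by
  rw [mem_Block] at hz
  obtain ⟨x, y⟩ := z
  simp only [dec, Prod.ext_iff] at hz
  constructor
  · rw [mem_grid']; simp at hz ⊢ <;> omega
  · simp only [enc]; simp at hz ⊢ <;> omega

lemma blockSub {b : ℕ} (h1 : b % 8 < 7) (h2 : b / 8 < 7) : Block (dec b) ⊆ grid 8 8 :=
  fun _ hz => (blockIdx h1 h2 hz).1

lemma testBit_place {occ i j m : ℕ} :
    (place occ i j).testBit m = true ↔ occ.testBit m = true ∨ m = i ∨ m = j := by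
  simp [place, Nat.testBit_or, Nat.one_shiftLeft, Nat.testBit_two_pow]
  tauto

-- uniqueness of piece through a cell
lemma uniqAt {C : Finset (Finset (ℤ × ℤ))} (hC : DominoTatami (grid 8 8) C)
    {z : ℤ × ℤ} {d e : Finset (ℤ × ℤ)} (hz : z ∈ grid 8 8)
    (hd : d ∈ C) (he : e ∈ C) (h1 : z ∈ d) (h2 : z ∈ e) : d = e := by
  obtain ⟨f, -, hf⟩ := hC.1.2 z hz
  rw [hf d ⟨hd, h1⟩, hf e ⟨he, h2⟩]

lemma complete {C : Finset (Finset (ℤ × ℤ))} (hC : DominoTatami (grid 8 8) C) :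
    ∀ n (occ : ℕ) (rem : List ℕ) (D : List (ℕ × ℕ)),
      (∀ k, k < 64 → (k ∈ rem ↔ occ.testBit k = false)) →
      (rem.Pairwise (· < ·)) →
      (∀ k ∈ rem, k < 64) →
      (∀ q ∈ D, ({dec q.1, dec q.2} : Finset (ℤ × ℤ)) ∈ C) →
      (∀ q ∈ D, q.1 < 64 ∧ ((q.2 = q.1 + 1 ∧ q.1 % 8 < 7) ∨ q.2 = q.1 + 8) ∧ q.2 < 64) →
      (∀ m, m < 64 → (occ.testBit m = true ↔ ∃ q ∈ D, m = q.1 ∨ m = q.2)) →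
      (∀ e ∈ C, ∀ z ∈ e, occ.testBit (enc z) = true → ∃ q ∈ D, e = {dec q.1, dec q.2}) →
      rem.length ≤ n →
      ∃ L ∈ search n occ rem D, C = toC L := by
  -- leaf helper
  have leaf : ∀ (occ : ℕ) (D : List (ℕ × ℕ)),
      (∀ k, k < 64 → (k ∈ ([] : List ℕ) ↔ occ.testBit k = false)) →
      (∀ q ∈ D, ({dec q.1, dec q.2} : Finset (ℤ × ℤ)) ∈ C) →
      (∀ e ∈ C, ∀ z ∈ e, occ.testBit (enc z) = true → ∃ q ∈ D, e = {dec q.1, dec q.2}) →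
      C = toC D := by
    intro occ D hrem hD hclose
    apply Finset.Subset.antisymm
    · intro e he
      obtain ⟨a, b, hab, rfl⟩ := hC.2.1 e he
      have ha : a ∈ ({a, b} : Finset (ℤ × ℤ)) := Finset.mem_insert_self a _
      have hag : a ∈ grid 8 8 := hC.1.1 _ he ha
      have hbit : occ.testBit (enc a) = true := by
        have := hrem (enc a) (enc_lt hag)
        simp at this
        exact this
      obtain ⟨q, hqD, hq⟩ := hclose _ he a ha hbit
      simp only [toC, List.mem_toFinset, List.mem_map]
      exact ⟨q, hqD, hq.symm⟩
    · intro e he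
      simp only [toC, List.mem_toFinset, List.mem_map] at he
      obtain ⟨q, hqD, rfl⟩ := he
      exact hD q hqD
  intro n
  induction n with
  | zero =>
    intro occ rem D hrem hsort hrlt hD hq hocc hclose hn
    have : rem = [] := List.eq_nil_of_length_eq_zero (Nat.le_zero.mp hn)
    subst this
    exact ⟨D, by simp [search], leaf occ D hrem hD hclose⟩
  | succ n IH =>
    intro occ rem D hrem hsort hrlt hD hq hocc hclose hn
    match rem, hsort, hn with
    | [], _, _ =>
      exact ⟨D, by simp [search], leaf occ D hrem hD hclose⟩
    | i :: rest, hsort, hn =>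
      have hi64 : i < 64 := hrlt i (by simp)
      have hibit : occ.testBit i = false := (hrem i hi64).mp (by simp)
      have hc : dec i ∈ grid 8 8 := dec_mem hi64
      -- minimality
      have hmin : ∀ k, k < 64 → occ.testBit k = false → i ≤ k := by
        intro k hk hkbit
        have : k ∈ i :: rest := (hrem k hk).mpr hkbit
        rcases List.mem_cons.mp this with rfl | hk'
        · exact le_refl _
        · exact le_of_lt ((List.pairwise_cons.mp hsort).1 k hk')
      -- the domino at (dec i)
      obtain ⟨d, ⟨hdC, hcd⟩, -⟩ := hC.1.2 (dec i) hc
      obtain ⟨c', hd, hadj⟩ := partner (hC.2.1 d hdC) hcd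
      have hc'd : c' ∈ d := by rw [hd]; simp
      have hc'g : c' ∈ grid 8 8 := hC.1.1 d hdC hc'd
      -- no index decoding to c' is occupied
      have hfree : ∀ k, k < 64 → dec k = c' → occ.testBit k = false := by
        intro k hk hkc'
        by_contra hbit
        have hbit' : occ.testBit k = true := by
          cases h : occ.testBit k
          · exact absurd h hbit
          · rfl
        obtain ⟨q, hqD, hkq⟩ := (hocc k hk).mp hbit'
        have heC := hD q hqD
        have hc'e : c' ∈ ({dec q.1, dec q.2} : Finset (ℤ × ℤ)) := by
          rcases hkq with rfl | rfl
          · rw [hkc'.symm]; simp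
          · rw [hkc'.symm]; simp
        have hde : d = {dec q.1, dec q.2} := uniqAt hC hc'g hdC heC hc'd hc'e
        have hcq : dec i = dec q.1 ∨ dec i = dec q.2 := by
          have : dec i ∈ ({dec q.1, dec q.2} : Finset (ℤ × ℤ)) := by rw [← hde]; exact hcd
          simpa using this
        have hq1 := hq q hqD
        have : occ.testBit i = true := by
          apply (hocc i hi64).mpr
          refine ⟨q, hqD, ?_⟩
          rcases hcq with h | h
          · left; have := congrArg enc h; rwa [enc_dec hi64, enc_dec hq1.1] at this
          · right; have := congrArg enc h; rwa [enc_dec hi64, enc_dec hq1.2.2] at this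
        rw [hibit] at this; exact absurd this (by simp)
      -- generic branch lemma
      have key : ∀ j, j < 64 → dec j = c' → ((j = i + 1 ∧ i % 8 < 7) ∨ j = i + 8) →
          occ.testBit j = false ∧
          (∀ bs, tatB (place occ i j) ((i, j) :: D) bs = true) ∧
          ∃ L ∈ search n (place occ i j) (rest.erase j) ((i, j) :: D), C = toC L := by
        intro j hj64 hdecj hordj
        have hjbit : occ.testBit j = false := hfree j hj64 hdecj
        have hij : i ≠ j := by omega
        -- new closure
        have hclose' : ∀ e ∈ C, ∀ z ∈ e, (place occ i j).testBit (enc z) = true →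
            ∃ q ∈ (i, j) :: D, e = {dec q.1, dec q.2} := by
          intro e heC z hze hbit
          have hzg : z ∈ grid 8 8 := hC.1.1 e heC hze
          rcases testBit_place.mp hbit with h | h | h
          · obtain ⟨q, hqD, hq⟩ := hclose e heC z hze h
            exact ⟨q, by simp [hqD], hq⟩
          · have hz : z = dec i := by rw [← dec_enc hzg, h]
            refine ⟨(i, j), by simp, ?_⟩
            have : e = d := uniqAt hC (hz ▸ hzg) heC hdC (hz ▸ hze) hcd
            rw [this, hd, hdecj]
          · have hz : z = dec j := by rw [← dec_enc hzg, h]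
            refine ⟨(i, j), by simp, ?_⟩
            have hzc' : z = c' := by rw [hz, hdecj]
            have : e = d := uniqAt hC (hzc' ▸ hzg) heC hdC (hzc' ▸ hze) hc'd
            rw [this, hd, hdecj]
        -- new occupancy
        have hocc' : ∀ m, m < 64 →
            ((place occ i j).testBit m = true ↔ ∃ q ∈ (i, j) :: D, m = q.1 ∨ m = q.2) := by
          intro m hm
          rw [testBit_place]
          constructor
          · rintro (h | h | h)
            · obtain ⟨q, hqD, hq⟩ := (hocc m hm).mp h
              exact ⟨q, by simp [hqD], hq⟩
            · exact ⟨(i, j), by simp, Or.inl h⟩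
            · exact ⟨(i, j), by simp, Or.inr h⟩
          · rintro ⟨q, hqD, hq⟩
            rcases List.mem_cons.mp hqD with rfl | hqD
            · rcases hq with rfl | rfl
              · exact Or.inr (Or.inl rfl)
              · exact Or.inr (Or.inr rfl)
            · exact Or.inl ((hocc m hm).mpr ⟨q, hqD, hq⟩)
        -- tatami check passes
        have htat : ∀ bs, tatB (place occ i j) ((i, j) :: D) bs = true := by
          intro bs
          rw [tatB, List.all_eq_true]
          intro b hb
          rw [Bool.or_eq_true]
          by_cases hg : b % 8 < 7 ∧ b / 8 < 7 ∧ ∀ m ∈ [b, b+1, b+8, b+9], (place occ i j).testBit m = true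
          · right
            obtain ⟨hg1, hg2, hg3⟩ := hg
            obtain ⟨e, heC, hecard⟩ := hC.2.2 (dec b) (blockSub hg1 hg2)
            -- e is contained in the block
            obtain ⟨a1, a2, ha12, he2⟩ := hC.2.1 e heC
            have hecard2 : e.card = 2 := by rw [he2]; exact Finset.card_pair (adj_ne ha12)
            have hsub : e ⊆ Block (dec b) := by
              have h1 : e ∩ Block (dec b) ⊆ e := Finset.inter_subset_left
              have h2 : e ∩ Block (dec b) = e :=
                Finset.eq_of_subset_of_card_le h1 (by omega)
              rw [← h2]; exact Finset.inter_subset_right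
            -- one cell of e is covered, so e is registered
            have ha1e : a1 ∈ e := by rw [he2]; simp
            have ha1b := blockIdx hg1 hg2 (hsub ha1e)
            have hbit1 : (place occ i j).testBit (enc a1) = true := by
              apply hg3
              rcases ha1b.2 with h | h | h | h <;> simp [h]
            obtain ⟨q, hqD', hq'⟩ := hclose' e heC a1 ha1e hbit1
            -- q's endpoints are in the block
            have hqq : ∀ x, (x = q.1 ∨ x = q.2) → x < 64 ∧ (x = b ∨ x = b + 1 ∨ x = b + 8 ∨ x = b + 9) := by
              intro x hx
              have hx64 : x < 64 := by
                rcases List.mem_cons.mp hqD' with rfl | hqd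
                · rcases hx with rfl | rfl
                  · exact hi64
                  · exact hj64
                · have := hq q hqd
                  rcases hx with rfl | rfl
                  · exact this.1
                  · exact this.2.2
              refine ⟨hx64, ?_⟩
              have hdx : dec x ∈ e := by
                rw [hq']
                rcases hx with rfl | rfl
                · exact Finset.mem_insert_self _ _
                · exact Finset.mem_insert_of_mem (Finset.mem_singleton_self _)
              have := (blockIdx hg1 hg2 (hsub hdx)).2
              rwa [enc_dec hx64] at this
            have hq1 := hqq q.1 (Or.inl rfl)
            have hq2 := hqq q.2 (Or.inr rfl)
            have hord : (q.2 = q.1 + 1) ∨ q.2 = q.1 + 8 := by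
              rcases List.mem_cons.mp hqD' with rfl | hqd
              · simp only []
                rcases hordj with ⟨h, -⟩ | h
                · left; exact h
                · right; exact h
              · rcases (hq q hqd).2.1 with ⟨h, -⟩ | h
                · left; exact h
                · right; exact h
            rw [covTwoN, List.any_eq_true]
            refine ⟨q, hqD', decide_eq_true ?_⟩
            obtain ⟨q1, q2⟩ := q
            simp only [Prod.ext_iff]
            simp at hq1 hq2 hord ⊢
            omega
          · left
            simp only [Bool.not_eq_true', Bool.and_eq_false_iff]
            by_cases h1 : b % 8 < 7
            · by_cases h2 : b / 8 < 7
              · right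
                rw [← Bool.not_eq_true, List.all_eq_true]
                intro hall
                exact hg ⟨h1, h2, fun m hm => hall m hm⟩
              · left; right; simpa using h2
            · left; left; simpa using h1
        refine ⟨hjbit, htat, ?_⟩
        -- invariants for recursive call
        have hrestsort := (List.pairwise_cons.mp hsort).2
        have hrestlt := (List.pairwise_cons.mp hsort).1
        have hnodup : rest.Nodup := hrestsort.nodup
        apply IH (place occ i j) (rest.erase j) ((i, j) :: D)
        · intro k hk
          rw [List.Nodup.mem_erase_iff hnodup]
          constructor
          · rintro ⟨hkj, hkrest⟩
            have hkbit : occ.testBit k = false := (hrem k hk).mp (by simp [hkrest])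
            have hki : k ≠ i := by have := hrestlt k hkrest; omega
            cases h : (place occ i j).testBit k
            · rfl
            · rcases testBit_place.mp h with h' | h' | h'
              · rw [h'] at hkbit; exact absurd hkbit (by simp)
              · exact absurd h' hki
              · exact absurd h' hkj
          · intro hkbit
            have h1 : occ.testBit k = false := by
              cases h : occ.testBit k
              · rfl
              · have : (place occ i j).testBit k = true := testBit_place.mpr (Or.inl h)
                rw [this] at hkbit; exact absurd hkbit (by simp)
            have h2 : k ≠ i := by
              intro hki2
              have : (place occ i j).testBit k = true := testBit_place.mpr (Or.inr (Or.inl hki2))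
              rw [this] at hkbit; exact absurd hkbit (by simp)
            have h3 : k ≠ j := by
              intro hkj2
              have : (place occ i j).testBit k = true := testBit_place.mpr (Or.inr (Or.inr hkj2))
              rw [this] at hkbit; exact absurd hkbit (by simp)
            have : k ∈ i :: rest := (hrem k hk).mpr h1
            rcases List.mem_cons.mp this with rfl | h
            · exact absurd rfl h2
            · exact ⟨h3, h⟩
        · exact hrestsort.erase _
        · intro k hk; exact hrlt k (List.mem_cons_of_mem _ ((rest.erase_sublist (a := j)).subset hk))
        · intro q hqD'
          rcases List.mem_cons.mp hqD' with rfl | hqd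
          · simp only []
            rw [hdecj]; rw [← hd]; exact hdC
          · exact hD q hqd
        · intro q hqD'
          rcases List.mem_cons.mp hqD' with rfl | hqd
          · exact ⟨hi64, hordj, hj64⟩
          · exact hq q hqd
        · exact hocc'
        · exact hclose'
        · calc (rest.erase j).length ≤ rest.length := (rest.erase_sublist (a := j)).length_le
          _ ≤ n := by simpa using hn
      -- case analysis on the partner direction
      have hd1 : dec i = (((i % 8 : ℕ) : ℤ), ((i / 8 : ℕ) : ℤ)) := rfl
      rcases adj_cases hadj with hcc | hcc | hcc | hcc
      · -- right
        have hmod : i % 8 < 7 := by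
          have := mem_grid'.mp hc'g
          rw [hcc, hd1] at this
          simp at this; omega
        have hj64 : i + 1 < 64 := by omega
        have hdecj : dec (i + 1) = c' := by
          rw [hcc, hd1]
          simp only [dec, Prod.ext_iff, Prod.fst, Prod.snd]
          refine ⟨?_, ?_⟩ <;> simp <;> omega
        obtain ⟨hjf, htat, L, hL, hCL⟩ := key (i + 1) hj64 hdecj (Or.inl ⟨rfl, hmod⟩)
        refine ⟨L, ?_, hCL⟩
        have hg : (decide (i % 8 < 7) && !occ.testBit (i+1) &&
            tatB (place occ i (i+1)) ((i, i+1) :: D) (hBlocks i)) = true := by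
          rw [decide_eq_true hmod, hjf, htat (hBlocks i)]; rfl
        show L ∈ search (n + 1) occ (i :: rest) D
        simp only [search]
        rw [hg]
        exact List.mem_append_left _ hL
      · -- left: impossible
        exfalso
        have hge : (0:ℤ) ≤ (dec i).1 - 1 := by
          have := mem_grid'.mp hc'g; rw [hcc] at this; exact this.1
        rw [hd1] at hge
        have hk64 : enc c' < 64 := enc_lt hc'g
        have hkd : dec (enc c') = c' := dec_enc hc'g
        have hkv : enc c' = i - 1 ∧ 1 ≤ i := by
          rw [hcc, hd1]; simp [enc] at hge ⊢; omega
        have := hmin (enc c') hk64 (hfree _ hk64 hkd)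
        omega
      · -- up
        have hdiv : i / 8 < 7 := by
          have := mem_grid'.mp hc'g
          rw [hcc, hd1] at this
          simp at this; omega
        have hj64 : i + 8 < 64 := by omega
        have hdecj : dec (i + 8) = c' := by
          rw [hcc, hd1]
          simp only [dec, Prod.ext_iff, Prod.fst, Prod.snd]
          refine ⟨?_, ?_⟩ <;> simp <;> omega
        obtain ⟨hjf, htat, L, hL, hCL⟩ := key (i + 8) hj64 hdecj (Or.inr rfl)
        refine ⟨L, ?_, hCL⟩
        have hg : (decide (i / 8 < 7) && !occ.testBit (i+8) &&
            tatB (place occ i (i+8)) ((i, i+8) :: D) (vBlocks i)) = true := by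
          rw [decide_eq_true hdiv, hjf, htat (vBlocks i)]; rfl
        show L ∈ search (n + 1) occ (i :: rest) D
        simp only [search]
        rw [hg]
        exact List.mem_append_right _ hL
      · -- down: impossible
        exfalso
        have hge : (0:ℤ) ≤ (dec i).2 - 1 := by
          have := mem_grid'.mp hc'g; rw [hcc] at this; exact this.2.2.1
        rw [hd1] at hge
        have hk64 : enc c' < 64 := enc_lt hc'g
        have hkd : dec (enc c') = c' := dec_enc hc'g
        have hkv : enc c' = i - 8 ∧ 8 ≤ i := by
          rw [hcc, hd1]; simp [enc] at hge ⊢; omega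
        have := hmin (enc c') hk64 (hfree _ hk64 hkd)
        omega

lemma tatami_of (C : Finset (Finset (ℤ × ℤ)))
    (h1 : ∀ d ∈ C, d ⊆ grid 8 8)
    (h2 : ∀ c ∈ grid 8 8, ∃ d ∈ C, c ∈ d ∧ ∀ e ∈ C, c ∈ e → e = d)
    (h3 : ∀ d ∈ C, ∃ a ∈ d, ∃ b ∈ d, Adj a b ∧ d = {a, b})
    (h4 : ∀ p ∈ grid 7 7, ∃ d ∈ C, 2 ≤ (d ∩ Block p).card) :
    DominoTatami (grid 8 8) C := by
  refine ⟨⟨h1, ?_⟩, ?_, ?_⟩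
  · intro c hc
    obtain ⟨d, hd, hcd, hu⟩ := h2 c hc
    exact ⟨d, ⟨hd, hcd⟩, fun e he => hu e he.1 he.2⟩
  · intro d hd
    obtain ⟨a, -, b, -, hab, hd2⟩ := h3 d hd
    exact ⟨a, b, hab, hd2⟩
  · intro p hp
    apply h4
    have h1' := hp (show (p.1, p.2) ∈ Block p by simp [Block])
    have h2' := hp (show (p.1 + 1, p.2 + 1) ∈ Block p by simp [Block])
    rw [mem_grid'] at h1' h2'
    simp [grid] at h1' h2' ⊢
    omega

set_option maxRecDepth 2000000 in
lemma dt1 : DominoTatami (grid 8 8) Csol1 := by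
  apply tatami_of
  · decide +kernel
  · decide +kernel
  · decide +kernel
  · decide +kernel

set_option maxRecDepth 2000000 in
lemma dt2 : DominoTatami (grid 8 8) Csol2 := by
  apply tatami_of
  · decide +kernel
  · decide +kernel
  · decide +kernel
  · decide +kernel

set_option maxRecDepth 2000000 in
set_option maxHeartbeats 4000000 in
lemma search_result : ∀ L ∈ search 64 0 idxs [], toC L = Csol1 ∨ toC L = Csol2 := by decide +kernel

lemma forced (C : Finset (Finset (ℤ × ℤ))) (hC : DominoTatami (grid 8 8) C) :
    C = Csol1 ∨ C = Csol2 := by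
  obtain ⟨L, hL, hCL⟩ := complete hC 64 0 idxs []
    (by intro k hk; simp [idxs, Nat.zero_testBit, List.mem_range, hk])
    (by have : List.Pairwise (· < ·) (List.range 64) := List.pairwise_lt_range (n := 64)
        simpa [idxs] using this)
    (by intro k hk; simpa [idxs] using hk)
    (by simp)
    (by simp)
    (by intro m hm; simp [Nat.zero_testBit])
    (by intro e he z hz hbit; rw [Nat.zero_testBit] at hbit; exact absurd hbit (by simp))
    (by simp [idxs])
  rw [hCL]
  exact search_result L hL

set_option maxRecDepth 2000000 in
/-- The 8×8 grid has exactly two domino tatami coverings. -/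
theorem stmt1 : ∃ C₁ C₂ : Finset (Finset (ℤ × ℤ)), C₁ ≠ C₂ ∧
    ∀ C, DominoTatami (grid 8 8) C ↔ (C = C₁ ∨ C = C₂) := by
  refine ⟨Csol1, Csol2, by decide +kernel, fun C => ⟨forced C, ?_⟩⟩
  rintro (rfl | rfl)
  · exact dt1
  · exact dt2
end

section
/- The CNF formula constructed from a region R — with variables the edges of the grid graph on R, clauses (¬e ∨ ¬e′) for each pair of incident edges e, e′, a clause (e₁ ∨ e₂ ∨ e₃ ∨ e₄) for each vertex listing its incident edges, and a clause (h ∨ h′ ∨ v ∨ v′) for each 4-cycle hvh′v′ — is satisfiable if and only if R has a domino tatami covering; moreover, satisfying assignments correspond bijectively to domino tatami coverings of R. -/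
/-- The edges of the grid graph on the region `S`, as two-element Finsets. -/
def Edges (S : Finset (ℤ × ℤ)) : Finset (Finset (ℤ × ℤ)) :=
  ((S ×ˢ S).filter (fun p => Adj p.1 p.2)).image (fun p => {p.1, p.2})

/-- An assignment `σ` of Booleans to the edges satisfies the CNF formula of the
    region `S`: matching clauses, perfect-matching clauses, and tatami (4-cycle)
    clauses. -/
def Satisfies (S : Finset (ℤ × ℤ)) (σ : Finset (ℤ × ℤ) → Bool) : Prop :=
  (∀ e ∈ Edges S, ∀ e' ∈ Edges S, e ≠ e' → (e ∩ e').Nonempty →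
      ¬(σ e = true ∧ σ e' = true)) ∧
  (∀ c ∈ S, ∃ e ∈ Edges S, c ∈ e ∧ σ e = true) ∧
  (∀ p : ℤ × ℤ, Block p ⊆ S → ∃ e ∈ Edges S, e ⊆ Block p ∧ σ e = true)

lemma mem_edges {S : Finset (ℤ × ℤ)} {e : Finset (ℤ × ℤ)} :
    e ∈ Edges S ↔ ∃ a b, a ∈ S ∧ b ∈ S ∧ Adj a b ∧ e = {a, b} := by
  constructor
  · intro he
    simp only [Edges, Finset.mem_image, Finset.mem_filter, Finset.mem_product] at he
    obtain ⟨⟨a, b⟩, ⟨⟨ha, hb⟩, hadj⟩, rfl⟩ := he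
    exact ⟨a, b, ha, hb, hadj, rfl⟩
  · rintro ⟨a, b, ha, hb, hadj, rfl⟩
    simp only [Edges, Finset.mem_image, Finset.mem_filter, Finset.mem_product]
    exact ⟨(a, b), ⟨⟨ha, hb⟩, hadj⟩, rfl⟩

lemma edge_card {S : Finset (ℤ × ℤ)} {e : Finset (ℤ × ℤ)} (he : e ∈ Edges S) :
    e.card = 2 ∧ e ⊆ S := by
  obtain ⟨a, b, ha, hb, hadj, rfl⟩ := mem_edges.mp he
  refine ⟨Finset.card_pair (adj_ne hadj), ?_⟩
  intro x hx
  rcases Finset.mem_insert.mp hx with rfl | hx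
  · exact ha
  · rw [Finset.mem_singleton] at hx; subst hx; exact hb

lemma sat_to_tatami (S : Finset (ℤ × ℤ)) (σ : Finset (ℤ × ℤ) → Bool)
    (h : Satisfies S σ) :
    DominoTatami S ((Edges S).filter (fun e => σ e = true)) := by
  obtain ⟨hmatch, hperf, htat⟩ := h
  refine ⟨⟨?_, ?_⟩, ?_, ?_⟩
  · intro d hd
    exact (edge_card (Finset.mem_filter.mp hd).1).2
  · intro c hc
    obtain ⟨e, he, hce, hσ⟩ := hperf c hc
    refine ⟨e, ⟨Finset.mem_filter.mpr ⟨he, hσ⟩, hce⟩, ?_⟩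
    rintro d ⟨hd, hcd⟩
    rw [Finset.mem_filter] at hd
    by_contra hne
    exact hmatch d hd.1 e he hne ⟨c, Finset.mem_inter.mpr ⟨hcd, hce⟩⟩ ⟨hd.2, hσ⟩
  · intro d hd
    obtain ⟨a, b, _, _, hadj, rfl⟩ := mem_edges.mp (Finset.mem_filter.mp hd).1
    exact ⟨a, b, hadj, rfl⟩
  · intro p hp
    obtain ⟨e, he, hsub, hσ⟩ := htat p hp
    refine ⟨e, Finset.mem_filter.mpr ⟨he, hσ⟩, ?_⟩
    rw [Finset.inter_eq_left.mpr hsub]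
    exact (edge_card he).1.ge

lemma tatami_to_sat (S : Finset (ℤ × ℤ)) (C : Finset (Finset (ℤ × ℤ)))
    (h : DominoTatami S C) :
    Satisfies S (fun e => decide (e ∈ C)) ∧
    C = (Edges S).filter (fun e => decide (e ∈ C) = true) := by
  obtain ⟨⟨hsub, huniq⟩, hdom, htat⟩ := h
  have hCE : ∀ d ∈ C, d ∈ Edges S := by
    intro d hd
    obtain ⟨a, b, hadj, rfl⟩ := hdom d hd
    exact mem_edges.mpr ⟨a, b, hsub _ hd (by simp), hsub _ hd (by simp), hadj, rfl⟩
  constructor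
  · refine ⟨?_, ?_, ?_⟩
    · intro e he e' he' hne ⟨c, hc⟩ ⟨hσ, hσ'⟩
      rw [decide_eq_true_eq] at hσ hσ'
      rw [Finset.mem_inter] at hc
      have hcS : c ∈ S := (edge_card he).2 hc.1
      obtain ⟨d, -, hu⟩ := huniq c hcS
      exact hne ((hu e ⟨hσ, hc.1⟩).trans (hu e' ⟨hσ', hc.2⟩).symm)
    · intro c hc
      obtain ⟨d, ⟨hdC, hcd⟩, -⟩ := huniq c hc
      exact ⟨d, hCE d hdC, hcd, by simp [hdC]⟩
    · intro p hp
      obtain ⟨d, hdC, hcard⟩ := htat p hp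
      have he := hCE d hdC
      have hd2 : d.card = 2 := (edge_card he).1
      have : d ∩ Block p = d :=
        Finset.eq_of_subset_of_card_le Finset.inter_subset_left (by omega)
      refine ⟨d, he, ?_, by simp [hdC]⟩
      rw [← this]; exact Finset.inter_subset_right
  · ext e
    simp only [Finset.mem_filter, decide_eq_true_eq]
    exact ⟨fun hd => ⟨hCE e hd, hd⟩, fun hd => hd.2⟩

/-- The CNF formula of a region is satisfiable iff the region has a domino
    tatami covering; moreover, satisfying assignments (as functions on the edge
    set) correspond bijectively to domino tatami coverings, via taking the set
    of true edges. -/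
theorem stmt8 (S : Finset (ℤ × ℤ)) :
    ((∃ σ, Satisfies S σ) ↔ ∃ C, DominoTatami S C) ∧
    (∀ σ, Satisfies S σ →
      DominoTatami S ((Edges S).filter (fun e => σ e = true))) ∧
    (∀ C, DominoTatami S C → ∃ σ, Satisfies S σ ∧
      C = (Edges S).filter (fun e => σ e = true)) ∧
    (∀ σ σ', Satisfies S σ → Satisfies S σ' →
      (Edges S).filter (fun e => σ e = true) =
        (Edges S).filter (fun e => σ' e = true) →
      ∀ e ∈ Edges S, σ e = σ' e) := by
  refine ⟨⟨?_, ?_⟩, fun σ h => sat_to_tatami S σ h, ?_, ?_⟩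
  · rintro ⟨σ, h⟩
    exact ⟨_, sat_to_tatami S σ h⟩
  · rintro ⟨C, h⟩
    exact ⟨_, (tatami_to_sat S C h).1⟩
  · intro C h
    exact ⟨_, (tatami_to_sat S C h).1, (tatami_to_sat S C h).2⟩
  · intro σ σ' _ _ hfe e he
    have := Finset.ext_iff.mp hfe e
    simp only [Finset.mem_filter, he, true_and] at this
    cases hσ : σ e <;> cases hσ' : σ' e <;> simp [hσ, hσ'] at this ⊢
end

section
/- Domino tatami coverings of the 2×n grid are in bijection with sequences b₁...b_k of blocks of sizes 1 or 2 summing to n with no two consecutive 2-blocks, where a block of size 1 is a vertical domino and a block of size 2 is a 2×2 pair of stacked horizontal dominoes. -/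
/-- The pieces of the covering of the 2×n grid determined by a list of block
    sizes (1 = a vertical domino; 2 = a 2×2 pair of horizontal dominoes),
    starting at column `i`. -/
def blockPieces : ℤ → List ℕ → Finset (Finset (ℤ × ℤ))
  | _, [] => ∅
  | i, k :: L =>
      (if k = 1 then ({({(i, 0), (i, 1)} : Finset (ℤ × ℤ))} : Finset (Finset (ℤ × ℤ)))
       else ({({(i, 0), (i + 1, 0)} : Finset (ℤ × ℤ)),
              ({(i, 1), (i + 1, 1)} : Finset (ℤ × ℤ))} : Finset (Finset (ℤ × ℤ))))
      ∪ blockPieces (i + k) L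

/-- A composition of n into parts 1 and 2 with no two consecutive 2's. -/
def ValidComp (n : ℕ) (L : List ℕ) : Prop :=
  (∀ x ∈ L, x = 1 ∨ x = 2) ∧ L.sum = n ∧
  List.Chain' (fun a b => ¬(a = 2 ∧ b = 2)) L

noncomputable def Slab (i : ℤ) (n : ℕ) : Finset (ℤ × ℤ) := Finset.Ico i (i + n) ×ˢ Finset.Ico 0 2

lemma mem_Slab {i x y : ℤ} {n : ℕ} :
    ((x, y) ∈ Slab i n) ↔ i ≤ x ∧ x < i + n ∧ 0 ≤ y ∧ y < 2 := by
  simp [Slab, and_assoc]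

lemma Slab_mono {i j : ℤ} {m n : ℕ} (h1 : i ≤ j) (h2 : (j:ℤ) + m ≤ i + n) :
    Slab j m ⊆ Slab i n := by
  rintro ⟨x, y⟩ hc; rw [mem_Slab] at *; omega

def V (i : ℤ) : Finset (ℤ × ℤ) := {(i,0),(i,1)}
def H0 (i : ℤ) : Finset (ℤ × ℤ) := {(i,0),(i+1,0)}
def H1 (i : ℤ) : Finset (ℤ × ℤ) := {(i,1),(i+1,1)}

lemma bp_nil (i : ℤ) : blockPieces i [] = ∅ := rfl

lemma bp_cons (i : ℤ) (k : ℕ) (L : List ℕ) :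
    blockPieces i (k :: L) =
      (if k = 1 then {V i} else {H0 i, H1 i}) ∪ blockPieces (i + k) L := rfl

lemma bp_one (i : ℤ) (L : List ℕ) :
    blockPieces i (1 :: L) = {V i} ∪ blockPieces (i+1) L := by
  rw [bp_cons]; norm_num

lemma bp_two (i : ℤ) (L : List ℕ) :
    blockPieces i (2 :: L) = {H0 i, H1 i} ∪ blockPieces (i+2) L := by
  rw [bp_cons]; norm_num

lemma bp_subset : ∀ (L : List ℕ) (i : ℤ), (∀ x ∈ L, x = 1 ∨ x = 2) →
    ∀ d ∈ blockPieces i L, d ⊆ Slab i L.sum := by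
  intro L
  induction L with
  | nil => intro i _ d hd; simp [bp_nil] at hd
  | cons k M ih =>
    intro i hk d hd
    have hparts : ∀ x ∈ M, x = 1 ∨ x = 2 := fun z hz => hk z (List.mem_cons_of_mem _ hz)
    have hsum : (k :: M).sum = k + M.sum := List.sum_cons
    rcases hk k (List.mem_cons_self) with rfl | rfl
    · rw [bp_one] at hd
      rcases Finset.mem_union.1 hd with h | h
      · rw [Finset.mem_singleton] at h; subst h
        rintro ⟨x, y⟩ hc
        simp only [V, Finset.mem_insert, Finset.mem_singleton, Prod.mk.injEq] at hc
        rw [mem_Slab, hsum]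
        omega
      · refine (ih (i+1) hparts d h).trans (Slab_mono (by omega) ?_)
        rw [hsum]; omega
    · rw [bp_two] at hd
      rcases Finset.mem_union.1 hd with h | h
      · rintro ⟨x, y⟩ hc
        rw [mem_Slab, hsum]
        rcases Finset.mem_insert.1 h with rfl | h
        · simp only [H0, Finset.mem_insert, Finset.mem_singleton, Prod.mk.injEq] at hc
          omega
        · rw [Finset.mem_singleton] at h; subst h
          simp only [H1, Finset.mem_insert, Finset.mem_singleton, Prod.mk.injEq] at hc
          omega
      · refine (ih (i+2) hparts d h).trans (Slab_mono (by omega) ?_)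
        rw [hsum]; omega

lemma bp_domino : ∀ (L : List ℕ) (i : ℤ), ∀ d ∈ blockPieces i L, IsDomino d := by
  intro L
  induction L with
  | nil => intro i d hd; simp [bp_nil] at hd
  | cons k M ih =>
    intro i d hd
    rw [bp_cons] at hd
    rcases Finset.mem_union.1 hd with h | h
    · split at h
      · rw [Finset.mem_singleton] at h; subst h
        exact ⟨(i,0), (i,1), by unfold Adj; simp, rfl⟩
      · rcases Finset.mem_insert.1 h with rfl | h
        · exact ⟨(i,0), (i+1,0), by unfold Adj; simp, rfl⟩
        · rw [Finset.mem_singleton] at h; subst h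
          exact ⟨(i,1), (i+1,1), by unfold Adj; simp, rfl⟩
    · exact ih (i + k) d h

lemma bp_cover : ∀ (L : List ℕ) (i : ℤ), (∀ x ∈ L, x = 1 ∨ x = 2) →
    ∀ c ∈ Slab i L.sum, ∃! d, d ∈ blockPieces i L ∧ c ∈ d := by
  intro L
  induction L with
  | nil => rintro i _ ⟨x,y⟩ hc; rw [mem_Slab] at hc; simp at hc; omega
  | cons k M ih =>
    rintro i hk ⟨x, y⟩ hc
    have hparts : ∀ z ∈ M, z = 1 ∨ z = 2 := fun z hz => hk z (List.mem_cons_of_mem _ hz)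
    rw [mem_Slab, List.sum_cons] at hc
    rcases hk k (List.mem_cons_self) with rfl | rfl
    · rw [bp_one]
      by_cases hx : x = i
      · obtain rfl : i = x := hx.symm
        refine ⟨V i, ⟨Finset.mem_union_left _ (Finset.mem_singleton_self _), ?_⟩, ?_⟩
        · simp only [V, Finset.mem_insert, Finset.mem_singleton, Prod.mk.injEq, and_true, true_and]; omega
        · rintro d' ⟨hd', hcd'⟩
          rcases Finset.mem_union.1 hd' with h | h
          · exact Finset.mem_singleton.1 h
          · have := mem_Slab.1 (bp_subset M (i+1) hparts d' h hcd')
            omega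
      · have hc2 : ((x:ℤ), y) ∈ Slab (i+1) M.sum := by rw [mem_Slab]; omega
        obtain ⟨d, ⟨hd, hcd⟩, hdu⟩ := ih (i+1) hparts _ hc2
        refine ⟨d, ⟨Finset.mem_union_right _ hd, hcd⟩, ?_⟩
        rintro d' ⟨hd', hcd'⟩
        rcases Finset.mem_union.1 hd' with h | h
        · rw [Finset.mem_singleton] at h; subst h
          simp only [V, Finset.mem_insert, Finset.mem_singleton, Prod.mk.injEq, and_true, true_and] at hcd'
          omega
        · exact hdu d' ⟨h, hcd'⟩
    · rw [bp_two]
      by_cases hx : x ≤ i + 1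
      · rcases (by omega : y = 0 ∨ y = 1) with rfl | rfl
        · refine ⟨H0 i, ⟨Finset.mem_union_left _ (Finset.mem_insert_self _ _), ?_⟩, ?_⟩
          · simp only [H0, Finset.mem_insert, Finset.mem_singleton, Prod.mk.injEq, and_true, true_and]; omega
          · rintro d' ⟨hd', hcd'⟩
            rcases Finset.mem_union.1 hd' with h | h
            · rcases Finset.mem_insert.1 h with rfl | h
              · rfl
              · rw [Finset.mem_singleton] at h; subst h
                simp only [H1, Finset.mem_insert, Finset.mem_singleton, Prod.mk.injEq, and_true, true_and] at hcd'
                omega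
            · have := mem_Slab.1 (bp_subset M (i+2) hparts d' h hcd')
              omega
        · refine ⟨H1 i, ⟨Finset.mem_union_left _ (Finset.mem_insert_of_mem (Finset.mem_singleton_self _)), ?_⟩, ?_⟩
          · simp only [H1, Finset.mem_insert, Finset.mem_singleton, Prod.mk.injEq, and_true, true_and]; omega
          · rintro d' ⟨hd', hcd'⟩
            rcases Finset.mem_union.1 hd' with h | h
            · rcases Finset.mem_insert.1 h with rfl | h
              · simp only [H0, Finset.mem_insert, Finset.mem_singleton, Prod.mk.injEq, and_true, true_and] at hcd'
                omega
              · exact Finset.mem_singleton.1 h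
            · have := mem_Slab.1 (bp_subset M (i+2) hparts d' h hcd')
              omega
      · have hc2 : ((x:ℤ), y) ∈ Slab (i+2) M.sum := by rw [mem_Slab]; omega
        obtain ⟨d, ⟨hd, hcd⟩, hdu⟩ := ih (i+2) hparts _ hc2
        refine ⟨d, ⟨Finset.mem_union_right _ hd, hcd⟩, ?_⟩
        rintro d' ⟨hd', hcd'⟩
        rcases Finset.mem_union.1 hd' with h | h
        · rcases Finset.mem_insert.1 h with rfl | h
          · simp only [H0, Finset.mem_insert, Finset.mem_singleton, Prod.mk.injEq, and_true, true_and] at hcd'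
            omega
          · rw [Finset.mem_singleton] at h; subst h
            simp only [H1, Finset.mem_insert, Finset.mem_singleton, Prod.mk.injEq, and_true, true_and] at hcd'
            omega
        · exact hdu d' ⟨h, hcd'⟩

lemma two_le_card_inter {d B : Finset (ℤ×ℤ)} {a b : ℤ×ℤ} (hab : a ≠ b)
    (ha : a ∈ d) (ha' : a ∈ B) (hb : b ∈ d) (hb' : b ∈ B) : 2 ≤ (d ∩ B).card := by
  have hs : ({a, b} : Finset (ℤ×ℤ)) ⊆ d ∩ B := by
    intro z hz
    rcases Finset.mem_insert.1 hz with rfl | hz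
    · exact Finset.mem_inter.2 ⟨ha, ha'⟩
    · rw [Finset.mem_singleton] at hz; subst hz
      exact Finset.mem_inter.2 ⟨hb, hb'⟩
  calc 2 = ({a, b} : Finset (ℤ×ℤ)).card := (Finset.card_pair hab).symm
    _ ≤ _ := Finset.card_le_card hs

lemma bp_tatami : ∀ (L : List ℕ) (i : ℤ), (∀ x ∈ L, x = 1 ∨ x = 2) →
    List.Chain' (fun a b => ¬(a = 2 ∧ b = 2)) L →
    ∀ j : ℤ, i ≤ j → j + 1 < i + L.sum →
    ∃ d ∈ blockPieces i L, 2 ≤ (d ∩ Block (j, 0)).card := by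
  intro L
  induction L with
  | nil => intro i _ _ j h1 h2; simp at h2; omega
  | cons k M ih =>
    intro i hk hch j h1 h2
    have hparts : ∀ z ∈ M, z = 1 ∨ z = 2 := fun z hz => hk z (List.mem_cons_of_mem _ hz)
    have hch' : List.Chain' (fun a b => ¬(a = 2 ∧ b = 2)) M := (List.isChain_cons.1 hch).2
    rw [List.sum_cons] at h2
    rcases hk k (List.mem_cons_self) with rfl | rfl
    · rcases (by omega : i = j ∨ i + 1 ≤ j) with rfl | hj
      · refine ⟨V i, by rw [bp_one]; exact Finset.mem_union_left _ (Finset.mem_singleton_self _), ?_⟩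
        refine two_le_card_inter (a := (i,0)) (b := (i,1)) (by simp) ?_ ?_ ?_ ?_
        · simp [V]
        · simp [Block]
        · simp [V]
        · simp [Block]
      · obtain ⟨d, hd, hcard⟩ := ih (i+1) hparts hch' j (by omega) (by omega)
        exact ⟨d, by rw [bp_one]; exact Finset.mem_union_right _ hd, hcard⟩
    · rcases (by omega : i = j ∨ i + 1 = j ∨ i + 2 ≤ j) with rfl | rfl | hj
      · refine ⟨H0 i, by rw [bp_two]; exact Finset.mem_union_left _ (Finset.mem_insert_self _ _), ?_⟩
        refine two_le_card_inter (a := (i,0)) (b := (i+1,0)) (by simp) ?_ ?_ ?_ ?_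
        · simp [H0]
        · simp [Block]
        · simp [H0]
        · simp [Block]
      · match M, hparts, hch, h2 with
        | [], _, _, h2 => simp at h2; omega
        | k' :: M', hparts, hch, h2 =>
          have hk'1 : k' = 1 := by
            have := (List.isChain_cons_cons.1 hch).1
            rcases hparts k' (List.mem_cons_self) with h | h
            · exact h
            · exact absurd ⟨rfl, h⟩ this
          subst hk'1
          refine ⟨V (i+2), ?_, ?_⟩
          · rw [bp_two]
            refine Finset.mem_union_right _ ?_
            rw [bp_one]
            exact Finset.mem_union_left _ (Finset.mem_singleton_self _)
          · refine two_le_card_inter (a := (i+2,0)) (b := (i+2,1)) (by simp) ?_ ?_ ?_ ?_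
            · simp [V]
            · simp only [Block, Finset.mem_insert, Finset.mem_singleton, Prod.mk.injEq, and_true, true_and]; omega
            · simp [V]
            · simp only [Block, Finset.mem_insert, Finset.mem_singleton, Prod.mk.injEq, and_true, true_and]; omega
      · obtain ⟨d, hd, hcard⟩ := ih (i+2) hparts hch' j (by omega) (by omega)
        exact ⟨d, by rw [bp_two]; exact Finset.mem_union_right _ hd, hcard⟩

lemma vmem {k : ℕ} (hk : k = 1 ∨ k = 2) {M : List ℕ} (hM : ∀ x ∈ M, x = 1 ∨ x = 2) (i : ℤ) :
    V i ∈ blockPieces i (k :: M) ↔ k = 1 := by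
  constructor
  · intro h
    rcases hk with rfl | rfl
    · rfl
    · exfalso
      rw [bp_two] at h
      rcases Finset.mem_union.1 h with h | h
      · rcases Finset.mem_insert.1 h with h | h
        · have : ((i:ℤ),(1:ℤ)) ∈ H0 i := by rw [← h]; simp [V]
          simp only [H0, Finset.mem_insert, Finset.mem_singleton, Prod.mk.injEq] at this
          omega
        · rw [Finset.mem_singleton] at h
          have : ((i:ℤ),(0:ℤ)) ∈ H1 i := by rw [← h]; simp [V]
          simp only [H1, Finset.mem_insert, Finset.mem_singleton, Prod.mk.injEq] at this
          omega
      · have := mem_Slab.1 (bp_subset M (i+2) hM (V i) h (by simp [V] : ((i:ℤ),(0:ℤ)) ∈ V i))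
        omega
  · rintro rfl
    rw [bp_one]
    exact Finset.mem_union_left _ (Finset.mem_singleton_self _)

lemma tail_subset {k : ℕ} (hk : 1 ≤ k) {M M' : List ℕ} (hM : ∀ x ∈ M, x = 1 ∨ x = 2) (i : ℤ)
    (h : blockPieces i (k :: M) = blockPieces i (k :: M')) :
    blockPieces (i + k) M ⊆ blockPieces (i + k) M' := by
  intro d hd
  have hsub := bp_subset M (i + k) hM d hd
  have hmem : d ∈ blockPieces i (k :: M') := by
    rw [← h, bp_cons]; exact Finset.mem_union_right _ hd
  rw [bp_cons] at hmem
  rcases Finset.mem_union.1 hmem with hh | hh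
  · exfalso
    split at hh
    · rw [Finset.mem_singleton] at hh; subst hh
      have := mem_Slab.1 (hsub (by simp [V] : ((i:ℤ),(0:ℤ)) ∈ V i))
      omega
    · rcases Finset.mem_insert.1 hh with rfl | hh
      · have := mem_Slab.1 (hsub (by simp [H0] : ((i:ℤ),(0:ℤ)) ∈ H0 i))
        omega
      · rw [Finset.mem_singleton] at hh; subst hh
        have := mem_Slab.1 (hsub (by simp [H1] : ((i:ℤ),(1:ℤ)) ∈ H1 i))
        omega
  · exact hh

lemma bp_inj : ∀ (L L' : List ℕ) (i : ℤ),
    (∀ x ∈ L, x = 1 ∨ x = 2) → (∀ x ∈ L', x = 1 ∨ x = 2) →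
    blockPieces i L = blockPieces i L' → L = L' := by
  have nonem : ∀ (k : ℕ) (M : List ℕ) (i : ℤ), k = 1 ∨ k = 2 →
      (blockPieces i (k :: M)).Nonempty := by
    intro k M i hk
    rcases hk with rfl | rfl
    · exact ⟨V i, by rw [bp_one]; exact Finset.mem_union_left _ (Finset.mem_singleton_self _)⟩
    · exact ⟨H0 i, by rw [bp_two]; exact Finset.mem_union_left _ (Finset.mem_insert_self _ _)⟩
  intro L
  induction L with
  | nil =>
    intro L' i _ hL' h
    cases L' with
    | nil => rfl
    | cons k' M' =>
      exfalso
      obtain ⟨d, hd⟩ := nonem k' M' i (hL' k' (List.mem_cons_self))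
      rw [← h, bp_nil] at hd
      simp at hd
  | cons k M ih =>
    intro L' i hL hL' h
    cases L' with
    | nil =>
      exfalso
      obtain ⟨d, hd⟩ := nonem k M i (hL k (List.mem_cons_self))
      rw [h, bp_nil] at hd
      simp at hd
    | cons k' M' =>
      have hk := hL k (List.mem_cons_self)
      have hk' := hL' k' (List.mem_cons_self)
      have hMp : ∀ x ∈ M, x = 1 ∨ x = 2 := fun z hz => hL z (List.mem_cons_of_mem _ hz)
      have hMp' : ∀ x ∈ M', x = 1 ∨ x = 2 := fun z hz => hL' z (List.mem_cons_of_mem _ hz)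
      have hkk : k = k' := by
        have h1 := (vmem hk hMp i).symm.trans (h ▸ (vmem hk' hMp' i))
        omega
      subst hkk
      have htail : blockPieces (i + k) M = blockPieces (i + k) M' :=
        Finset.Subset.antisymm (tail_subset (by omega) hMp i h) (tail_subset (by omega) hMp' i h.symm)
      rw [ih M' (i + k) hMp hMp' htail]

lemma adj_comm {a b : ℤ×ℤ} (h : Adj a b) : Adj b a := by
  unfold Adj at *; omega

lemma unique_cover {S : Finset (ℤ×ℤ)} {C : Finset (Finset (ℤ×ℤ))}
    (hcov : ∀ c ∈ S, ∃! d, d ∈ C ∧ c ∈ d) {z : ℤ×ℤ} (hz : z ∈ S)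
    {d : Finset (ℤ×ℤ)} (hdC : d ∈ C) (hzd : z ∈ d) :
    ∀ d' ∈ C, z ∈ d' → d' = d := by
  obtain ⟨e, _, heu⟩ := hcov z hz
  intro d' h1 h2
  rw [heu d' ⟨h1, h2⟩, ← heu d ⟨hdC, hzd⟩]

lemma piece_shape {i : ℤ} {n : ℕ} {y0 : ℤ} (hy : y0 = 0 ∨ y0 = 1) {d : Finset (ℤ×ℤ)}
    (hdom : IsDomino d) (hsub : d ⊆ Slab i n) (hmem : ((i:ℤ), y0) ∈ d) :
    d = V i ∨ (2 ≤ n ∧ d = {((i:ℤ), y0), (i+1, y0)}) := by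
  obtain ⟨a, b, hab, rfl⟩ := hdom
  have key : ∃ q : ℤ×ℤ, ({a, b} : Finset (ℤ×ℤ)) = {((i:ℤ), y0), q} ∧ Adj (i, y0) q := by
    rcases Finset.mem_insert.1 hmem with h | h
    · exact ⟨b, by rw [← h], by rw [← h] at hab; exact hab⟩
    · rw [Finset.mem_singleton] at h
      refine ⟨a, by rw [Finset.pair_comm, ← h], adj_comm ?_⟩
      rw [← h] at hab; exact hab
  obtain ⟨⟨q1, q2⟩, hdq, hadj⟩ := key
  have hq : ((q1:ℤ), q2) ∈ Slab i n := by
    apply hsub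
    rw [hdq]
    exact Finset.mem_insert_of_mem (Finset.mem_singleton_self _)
  rw [mem_Slab] at hq
  unfold Adj at hadj
  simp only at hadj
  rcases hy with rfl | rfl
  · rcases (by omega : (q1 = i ∧ q2 = 1) ∨ (q1 = i + 1 ∧ q2 = 0 ∧ 2 ≤ (n:ℤ))) with ⟨rfl, rfl⟩ | ⟨rfl, rfl, hn⟩
    · exact Or.inl (by rw [hdq]; rfl)
    · exact Or.inr ⟨by omega, hdq⟩
  · rcases (by omega : (q1 = i ∧ q2 = 0) ∨ (q1 = i + 1 ∧ q2 = 1 ∧ 2 ≤ (n:ℤ))) with ⟨rfl, rfl⟩ | ⟨rfl, rfl, hn⟩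
    · exact Or.inl (by rw [hdq, Finset.pair_comm]; rfl)
    · exact Or.inr ⟨by omega, hdq⟩

lemma inter_card_le_one {d B : Finset (ℤ×ℤ)} (z : ℤ×ℤ) (h : ∀ c ∈ d, c ∈ B → c = z) :
    (d ∩ B).card ≤ 1 :=
  Finset.card_le_one.2 (fun a ha b hb => by
    rw [Finset.mem_inter] at ha hb
    rw [h a ha.1 ha.2, h b hb.1 hb.2])

lemma pair_union_erase {d e : Finset (ℤ×ℤ)} {C : Finset (Finset (ℤ×ℤ))}
    (hd : d ∈ C) (he : e ∈ C) :
    ({d, e} : Finset (Finset (ℤ×ℤ))) ∪ (C.erase d).erase e = C := by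
  ext x
  simp only [Finset.mem_union, Finset.mem_insert, Finset.mem_singleton, Finset.mem_erase]
  constructor
  · rintro ((rfl | rfl) | ⟨-, -, h⟩) <;> assumption
  · intro hx
    by_cases h1 : x = d
    · exact Or.inl (Or.inl h1)
    by_cases h2 : x = e
    · exact Or.inl (Or.inr h2)
    · exact Or.inr ⟨h2, h1, hx⟩

lemma inter_card_le_one' {d B : Finset (ℤ×ℤ)}
    (h : ∀ c ∈ d, ∀ c' ∈ d, c ∈ B → c' ∈ B → c = c') : (d ∩ B).card ≤ 1 :=
  Finset.card_le_one.2 (fun a ha b hb => by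
    rw [Finset.mem_inter] at ha hb
    exact h a ha.1 b hb.1 ha.2 hb.2)

lemma bp_surj : ∀ (n : ℕ) (i : ℤ) (C : Finset (Finset (ℤ × ℤ))),
    IsPartition (Slab i n) C → (∀ d ∈ C, IsDomino d) → TatamiCond (Slab i n) C →
    ∃ L, (∀ x ∈ L, x = 1 ∨ x = 2) ∧ L.sum = n ∧
      List.Chain' (fun a b => ¬(a = 2 ∧ b = 2)) L ∧ blockPieces i L = C := by
  intro n
  induction n using Nat.strong_induction_on with
  | _ n ih =>
  intro i C hpart hdom htat
  obtain ⟨hsub, hcov⟩ := hpart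
  rcases Nat.eq_zero_or_pos n with rfl | hn
  · refine ⟨[], by simp, by simp, List.isChain_nil, ?_⟩
    rw [bp_nil]
    symm
    apply Finset.eq_empty_of_forall_notMem
    intro d hd
    obtain ⟨⟨a1, a2⟩, b, hab, rfl⟩ := hdom d hd
    have := mem_Slab.1 (hsub _ hd (Finset.mem_insert_self _ _))
    omega
  · have h00 : ((i:ℤ), (0:ℤ)) ∈ Slab i n := by rw [mem_Slab]; omega
    obtain ⟨d, ⟨hdC, hd00⟩, _⟩ := hcov _ h00
    have u0 : ∀ d' ∈ C, ((i:ℤ),(0:ℤ)) ∈ d' → d' = d := unique_cover hcov h00 hdC hd00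
    rcases piece_shape (Or.inl rfl) (hdom d hdC) (hsub d hdC) hd00 with rfl | ⟨hn2, rfl⟩
    · -- vertical first block
      have h01 : ((i:ℤ), (1:ℤ)) ∈ Slab i n := by rw [mem_Slab]; omega
      have u1 : ∀ d' ∈ C, ((i:ℤ),(1:ℤ)) ∈ d' → d' = V i :=
        unique_cover hcov h01 hdC (by simp [V])
      have hsub' : ∀ d' ∈ C.erase (V i), d' ⊆ Slab (i+1) (n-1) := by
        intro d' hd'
        have hd'C := Finset.mem_of_mem_erase hd'
        have hne := Finset.ne_of_mem_erase hd'
        rintro ⟨x, y⟩ hc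
        have hcS := mem_Slab.1 (hsub d' hd'C hc)
        have hxi : x ≠ i := by
          intro h
          rw [h] at hc
          rcases (by omega : y = 0 ∨ y = 1) with rfl | rfl
          · exact hne (u0 d' hd'C hc)
          · exact hne (u1 d' hd'C hc)
        rw [mem_Slab]; omega
      have hcov' : ∀ c ∈ Slab (i+1) (n-1), ∃! d'', d'' ∈ C.erase (V i) ∧ c ∈ d'' := by
        rintro ⟨x, y⟩ hc
        have hc2 := mem_Slab.1 hc
        have hcS : ((x:ℤ), y) ∈ Slab i n := by rw [mem_Slab]; omega
        obtain ⟨d'', ⟨h1, h2⟩, hu⟩ := hcov _ hcS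
        have hne : d'' ≠ V i := by
          intro heq
          rw [heq] at h2
          simp only [V, Finset.mem_insert, Finset.mem_singleton, Prod.mk.injEq, and_true, true_and] at h2
          omega
        refine ⟨d'', ⟨Finset.mem_erase.2 ⟨hne, h1⟩, h2⟩, ?_⟩
        rintro y' ⟨hy1, hy2⟩
        exact hu y' ⟨Finset.mem_of_mem_erase hy1, hy2⟩
      have hdom' : ∀ d' ∈ C.erase (V i), IsDomino d' :=
        fun d' hd' => hdom d' (Finset.mem_of_mem_erase hd')
      have htat' : TatamiCond (Slab (i+1) (n-1)) (C.erase (V i)) := by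
        intro p hp
        have hp' : Block p ⊆ Slab i n := hp.trans (Slab_mono (by omega) (by omega))
        obtain ⟨d'', hd'', hcard⟩ := htat p hp'
        refine ⟨d'', Finset.mem_erase.2 ⟨?_, hd''⟩, hcard⟩
        intro heq
        rw [heq] at hcard
        have hem : V i ∩ Block p = ∅ := by
          apply Finset.eq_empty_of_forall_notMem
          rintro ⟨x, y⟩ hz
          rw [Finset.mem_inter] at hz
          have h1 := hz.1
          have h2 := (mem_Slab.1 (hp hz.2)).1
          simp only [V, Finset.mem_insert, Finset.mem_singleton, Prod.mk.injEq, and_true, true_and] at h1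
          omega
        rw [hem] at hcard
        simp at hcard
      obtain ⟨L', hp', hs', hc', hbp'⟩ :=
        ih (n-1) (by omega) (i+1) (C.erase (V i)) ⟨hsub', hcov'⟩ hdom' htat'
      refine ⟨1 :: L', ?_, ?_, ?_, ?_⟩
      · intro x hx
        rcases List.mem_cons.1 hx with rfl | hx
        · exact Or.inl rfl
        · exact hp' x hx
      · rw [List.sum_cons, hs']; omega
      · exact List.isChain_cons.2 ⟨fun b _ => by simp, hc'⟩
      · rw [bp_one, hbp', ← Finset.insert_eq, Finset.insert_erase hdC]
    · -- horizontal first block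
      have h01 : ((i:ℤ), (1:ℤ)) ∈ Slab i n := by rw [mem_Slab]; omega
      obtain ⟨e, ⟨heC, he1⟩, _⟩ := hcov _ h01
      have heH1 : e = H1 i := by
        rcases piece_shape (Or.inr rfl) (hdom e heC) (hsub e heC) he1 with rfl | ⟨-, he⟩
        · exfalso
          have h := u0 (V i) heC (by simp [V])
          have : ((i:ℤ),(1:ℤ)) ∈ ({((i:ℤ),(0:ℤ)),(i+1,0)} : Finset (ℤ×ℤ)) := by
            rw [← h]; simp [V]
          simp only [Finset.mem_insert, Finset.mem_singleton, Prod.mk.injEq, and_true, true_and] at this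
          omega
        · exact he
      subst heH1
      have hd10 : ((i:ℤ)+1, (0:ℤ)) ∈ Slab i n := by rw [mem_Slab]; omega
      have hd11 : ((i:ℤ)+1, (1:ℤ)) ∈ Slab i n := by rw [mem_Slab]; omega
      have u10 : ∀ d' ∈ C, ((i:ℤ)+1,(0:ℤ)) ∈ d' → d' = ({((i:ℤ),(0:ℤ)),(i+1,0)} : Finset (ℤ×ℤ)) :=
        unique_cover hcov hd10 hdC (by simp)
      have u01 : ∀ d' ∈ C, ((i:ℤ),(1:ℤ)) ∈ d' → d' = H1 i :=
        unique_cover hcov h01 heC (by simp [H1])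
      have u11 : ∀ d' ∈ C, ((i:ℤ)+1,(1:ℤ)) ∈ d' → d' = H1 i :=
        unique_cover hcov hd11 heC (by simp [H1])
      have hsub' : ∀ d' ∈ (C.erase ({((i:ℤ),(0:ℤ)),(i+1,0)} : Finset (ℤ×ℤ))).erase (H1 i),
          d' ⊆ Slab (i+2) (n-2) := by
        intro d' hd'
        have h1 := Finset.ne_of_mem_erase hd'
        have h2 := Finset.ne_of_mem_erase (Finset.mem_of_mem_erase hd')
        have hd'C := Finset.mem_of_mem_erase (Finset.mem_of_mem_erase hd')
        rintro ⟨x, y⟩ hc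
        have hcS := mem_Slab.1 (hsub d' hd'C hc)
        have hx2 : i + 2 ≤ x := by
          by_contra hlt
          have hy : y = 0 ∨ y = 1 := by omega
          rcases (by omega : (x = i ∨ x = i+1)) with h | h <;> rw [h] at hc <;>
            rcases hy with rfl | rfl
          · exact h2 (u0 d' hd'C hc)
          · exact h1 (u01 d' hd'C hc)
          · exact h2 (u10 d' hd'C hc)
          · exact h1 (u11 d' hd'C hc)
        rw [mem_Slab]; omega
      have hcov' : ∀ c ∈ Slab (i+2) (n-2),
          ∃! d'', d'' ∈ (C.erase ({((i:ℤ),(0:ℤ)),(i+1,0)} : Finset (ℤ×ℤ))).erase (H1 i) ∧ c ∈ d'' := by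
        rintro ⟨x, y⟩ hc
        have hc2 := mem_Slab.1 hc
        have hcS : ((x:ℤ), y) ∈ Slab i n := by rw [mem_Slab]; omega
        obtain ⟨d'', ⟨h1, h2⟩, hu⟩ := hcov _ hcS
        have hne1 : d'' ≠ ({((i:ℤ),(0:ℤ)),(i+1,0)} : Finset (ℤ×ℤ)) := by
          intro heq
          rw [heq] at h2
          simp only [Finset.mem_insert, Finset.mem_singleton, Prod.mk.injEq, and_true, true_and] at h2
          omega
        have hne2 : d'' ≠ H1 i := by
          intro heq
          rw [heq] at h2
          simp only [H1, Finset.mem_insert, Finset.mem_singleton, Prod.mk.injEq, and_true, true_and] at h2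
          omega
        refine ⟨d'', ⟨Finset.mem_erase.2 ⟨hne2, Finset.mem_erase.2 ⟨hne1, h1⟩⟩, h2⟩, ?_⟩
        rintro y' ⟨hy1, hy2⟩
        exact hu y' ⟨Finset.mem_of_mem_erase (Finset.mem_of_mem_erase hy1), hy2⟩
      have hdom' : ∀ d' ∈ (C.erase ({((i:ℤ),(0:ℤ)),(i+1,0)} : Finset (ℤ×ℤ))).erase (H1 i),
          IsDomino d' :=
        fun d' hd' => hdom d' (Finset.mem_of_mem_erase (Finset.mem_of_mem_erase hd'))
      have htat' : TatamiCond (Slab (i+2) (n-2))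
          ((C.erase ({((i:ℤ),(0:ℤ)),(i+1,0)} : Finset (ℤ×ℤ))).erase (H1 i)) := by
        intro p hp
        have hp' : Block p ⊆ Slab i n := hp.trans (Slab_mono (by omega) (by omega))
        obtain ⟨d'', hd'', hcard⟩ := htat p hp'
        have hblk : ∀ z ∈ Block p, ((i:ℤ)+2) ≤ z.1 := by
          rintro ⟨z1, z2⟩ hz
          exact (mem_Slab.1 (hp hz)).1
        refine ⟨d'', Finset.mem_erase.2 ⟨?_, Finset.mem_erase.2 ⟨?_, hd''⟩⟩, hcard⟩
        · intro heq
          rw [heq] at hcard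
          have hem : H1 i ∩ Block p = ∅ := by
            apply Finset.eq_empty_of_forall_notMem
            intro z hz
            rw [Finset.mem_inter] at hz
            have hz1 := hz.1
            have hz2 := hblk z hz.2
            simp only [H1, Finset.mem_insert, Finset.mem_singleton] at hz1
            rcases hz1 with rfl | rfl <;> simp at hz2
          rw [hem] at hcard; simp at hcard
        · intro heq
          rw [heq] at hcard
          have hem : ({((i:ℤ),(0:ℤ)),(i+1,0)} : Finset (ℤ×ℤ)) ∩ Block p = ∅ := by
            apply Finset.eq_empty_of_forall_notMem
            intro z hz
            rw [Finset.mem_inter] at hz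
            have hz1 := hz.1
            have hz2 := hblk z hz.2
            simp only [Finset.mem_insert, Finset.mem_singleton] at hz1
            rcases hz1 with rfl | rfl <;> simp at hz2
          rw [hem] at hcard; simp at hcard
      obtain ⟨L', hp', hs', hc', hbp'⟩ :=
        ih (n-2) (by omega) (i+2)
          ((C.erase ({((i:ℤ),(0:ℤ)),(i+1,0)} : Finset (ℤ×ℤ))).erase (H1 i))
          ⟨hsub', hcov'⟩ hdom' htat'
      have hCeq : C = blockPieces i (2 :: L') := by
        rw [bp_two, hbp']
        exact (pair_union_erase hdC heC).symm
      refine ⟨2 :: L', ?_, ?_, ?_, hCeq.symm⟩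
      · intro x hx
        rcases List.mem_cons.1 hx with rfl | hx
        · exact Or.inr rfl
        · exact hp' x hx
      · rw [List.sum_cons, hs']; omega
      · cases L' with
        | nil => exact List.isChain_singleton _
        | cons a M' =>
          by_cases ha : a = 2
          · exfalso
            subst ha
            have hsum : 2 + M'.sum = n - 2 := by rw [← hs']; simp [List.sum_cons]
            have hM'p : ∀ x ∈ M', x = 1 ∨ x = 2 := fun z hz => hp' z (List.mem_cons_of_mem _ hz)
            have hblock : Block ((i:ℤ)+1, 0) ⊆ Slab i n := by
              rintro ⟨x, y⟩ hz
              simp only [Block, Finset.mem_insert, Finset.mem_singleton, Prod.mk.injEq, and_true, true_and] at hz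
              rw [mem_Slab]
              omega
            obtain ⟨d'', hd'', hcard⟩ := htat _ hblock
            rw [hCeq, bp_two, bp_two] at hd''
            have hle : (d'' ∩ Block ((i:ℤ)+1, 0)).card ≤ 1 := by
              rcases Finset.mem_union.1 hd'' with h | h
              · rcases Finset.mem_insert.1 h with rfl | h
                · refine inter_card_le_one' ?_
                  rintro ⟨x,y⟩ hc ⟨x',y'⟩ hc' hB hB'
                  simp only [H0, H1, Block, Finset.mem_insert, Finset.mem_singleton,
                    Prod.mk.injEq, and_true, true_and] at hc hc' hB hB'
                  simp only [Prod.mk.injEq]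
                  omega
                · rw [Finset.mem_singleton] at h; subst h
                  refine inter_card_le_one' ?_
                  rintro ⟨x,y⟩ hc ⟨x',y'⟩ hc' hB hB'
                  simp only [H0, H1, Block, Finset.mem_insert, Finset.mem_singleton,
                    Prod.mk.injEq, and_true, true_and] at hc hc' hB hB'
                  simp only [Prod.mk.injEq]
                  omega
              · rcases Finset.mem_union.1 h with h | h
                · rcases Finset.mem_insert.1 h with rfl | h
                  · refine inter_card_le_one' ?_
                    rintro ⟨x,y⟩ hc ⟨x',y'⟩ hc' hB hB'
                    simp only [H0, H1, Block, Finset.mem_insert, Finset.mem_singleton,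
                      Prod.mk.injEq, and_true, true_and] at hc hc' hB hB'
                    simp only [Prod.mk.injEq]
                    omega
                  · rw [Finset.mem_singleton] at h; subst h
                    refine inter_card_le_one' ?_
                    rintro ⟨x,y⟩ hc ⟨x',y'⟩ hc' hB hB'
                    simp only [H0, H1, Block, Finset.mem_insert, Finset.mem_singleton,
                      Prod.mk.injEq, and_true, true_and] at hc hc' hB hB'
                    simp only [Prod.mk.injEq]
                    omega
                · have hsubd := bp_subset M' (i+2+2) hM'p d'' h
                  refine inter_card_le_one' ?_
                  rintro ⟨x,y⟩ hc ⟨x',y'⟩ hc' hB hB'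
                  exfalso
                  have h1 := (mem_Slab.1 (hsubd hc)).1
                  simp only [Block, Finset.mem_insert, Finset.mem_singleton,
                    Prod.mk.injEq, and_true, true_and] at hB
                  omega
            omega
          · exact List.isChain_cons_cons.2 ⟨fun hcontra => ha hcontra.2, hc'⟩

/-- Domino tatami coverings of the 2×n grid are in bijection (via `blockPieces`)
    with compositions of n into parts 1 and 2 having no two consecutive 2's. -/
theorem stmt15 (n : ℕ) :
    (∀ L, ValidComp n L → DominoTatami (grid n 2) (blockPieces 0 L)) ∧
    (∀ L L', ValidComp n L → ValidComp n L' →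
      blockPieces 0 L = blockPieces 0 L' → L = L') ∧
    (∀ C, DominoTatami (grid n 2) C →
      ∃ L, ValidComp n L ∧ blockPieces 0 L = C) := by
  have hgrid : grid n 2 = Slab 0 n := by
    simp [grid, Slab]
  refine ⟨?_, ?_, ?_⟩
  · rintro L ⟨hp, hs, hc⟩
    subst hs
    rw [hgrid]
    refine ⟨⟨bp_subset L 0 hp, bp_cover L 0 hp⟩, bp_domino L 0, ?_⟩
    rintro ⟨p1, p2⟩ hp'
    have h1 := mem_Slab.1 (hp' (by simp [Block] : ((p1:ℤ), p2) ∈ Block (p1, p2)))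
    have h2 := mem_Slab.1 (hp' (by simp [Block] : ((p1:ℤ)+1, p2+1) ∈ Block (p1, p2)))
    have hp2 : p2 = 0 := by omega
    subst hp2
    exact bp_tatami L 0 hp hc p1 (by omega) (by omega)
  · intro L L' h1 h2 h
    exact bp_inj L L' 0 h1.1 h2.1 h
  · intro C hC
    rw [hgrid] at hC
    obtain ⟨⟨hs, hc⟩, hd, ht⟩ := hC
    obtain ⟨L, ha, hb, hcc, hdd⟩ := bp_surj n 0 C ⟨hs, hc⟩ hd ht
    exact ⟨L, ⟨ha, hb, hcc⟩, hdd⟩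
end
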